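/- Uniqueness of the bounded solution: if f : ℝ → ℝ satisfies the functional equation (f(x))³ = 1 + 3x + x² f(x+2) for all x ≥ 1 and the bounds 2^{-3/2}(x+1) ≤ f(x) ≤ 2^{3/2}(x+1) for all x ≥ 1, then f(x) = x + 1 for all x ≥ 1. -/
import Mathlib

open Real Filter

private lemma cube_le_cube {a b : ℝ} (h : a ^ 3 ≤ b ^ 3) : a ≤ b :=
  ((Odd.strictMono_pow (R := ℝ) (⟨1, by norm_num⟩ : Odd 3)).le_iff_le).mp h

private lemma rpow_cube (a : ℝ) : ((2 : ℝ) ^ (a / 3)) ^ 3 = (2 : ℝ) ^ a := by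
  rw [← Real.rpow_natCast ((2:ℝ) ^ (a/3)) 3, ← Real.rpow_mul (by norm_num)]
  norm_num

private lemma step (f : ℝ → ℝ)
    (hfe : ∀ x : ℝ, 1 ≤ x → (f x) ^ 3 = 1 + 3 * x + x ^ 2 * f (x + 2))
    (a : ℝ) (ha : 0 ≤ a)
    (hl : ∀ x : ℝ, 1 ≤ x → (2 : ℝ) ^ (-a) * (x + 1) ≤ f x)
    (hu : ∀ x : ℝ, 1 ≤ x → f x ≤ (2 : ℝ) ^ a * (x + 1)) :
    (∀ x : ℝ, 1 ≤ x → (2 : ℝ) ^ (-(a/3)) * (x + 1) ≤ f x) ∧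
    (∀ x : ℝ, 1 ≤ x → f x ≤ (2 : ℝ) ^ (a/3) * (x + 1)) := by
  have h1 : (1:ℝ) ≤ (2:ℝ) ^ a := Real.one_le_rpow (by norm_num) ha
  have h2 : (2:ℝ) ^ (-a) ≤ 1 := Real.rpow_le_one_of_one_le_of_nonpos (by norm_num) (by linarith)
  have h2' : (0:ℝ) < (2:ℝ) ^ (-a) := Real.rpow_pos_of_pos (by norm_num) _
  constructor
  · intro x hx
    have hx2 : (1:ℝ) ≤ x + 2 := by linarith
    have hb := hl (x + 2) hx2
    have heq := hfe x hx
    apply cube_le_cube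
    have hcube : ((2:ℝ) ^ (-(a/3)) * (x+1)) ^ 3 = (2:ℝ) ^ (-a) * (x+1)^3 := by
      rw [mul_pow, show -(a/3) = (-a)/3 by ring, rpow_cube]
    rw [hcube, heq]
    nlinarith [sq_nonneg x, sq_nonneg (x-1), mul_le_mul_of_nonneg_left hb (sq_nonneg x)]
  · intro x hx
    have hx2 : (1:ℝ) ≤ x + 2 := by linarith
    have hb := hu (x + 2) hx2
    have heq := hfe x hx
    apply cube_le_cube
    have hcube : ((2:ℝ) ^ (a/3) * (x+1)) ^ 3 = (2:ℝ) ^ a * (x+1)^3 := by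
      rw [mul_pow, rpow_cube]
    rw [hcube, heq]
    nlinarith [sq_nonneg x, mul_le_mul_of_nonneg_left hb (sq_nonneg x)]

theorem bounded_solution_unique (f : ℝ → ℝ)
    (hfe : ∀ x : ℝ, 1 ≤ x → (f x) ^ 3 = 1 + 3 * x + x ^ 2 * f (x + 2))
    (hlb : ∀ x : ℝ, 1 ≤ x → (2 : ℝ) ^ (-(3 / 2) : ℝ) * (x + 1) ≤ f x)
    (hub : ∀ x : ℝ, 1 ≤ x → f x ≤ (2 : ℝ) ^ ((3 / 2) : ℝ) * (x + 1)) :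
    ∀ x : ℝ, 1 ≤ x → f x = x + 1 := by
  -- iterate
  set a : ℕ → ℝ := fun n => (3/2) * (1/3) ^ n with ha
  have key : ∀ n : ℕ, (∀ x : ℝ, 1 ≤ x → (2 : ℝ) ^ (-(a n)) * (x + 1) ≤ f x) ∧
      (∀ x : ℝ, 1 ≤ x → f x ≤ (2 : ℝ) ^ (a n) * (x + 1)) := by
    intro n
    induction n with
    | zero => simpa [ha] using ⟨hlb, hub⟩
    | succ k ih =>
      have hk : (0:ℝ) ≤ a k := by positivity
      have := step f hfe (a k) hk ih.1 ih.2
      have hsucc : a (k+1) = a k / 3 := by simp [ha]; ring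
      rw [hsucc]
      exact this
  intro x hx
  have ha0 : Tendsto a atTop (nhds 0) := by
    have := tendsto_pow_atTop_nhds_zero_of_lt_one (by norm_num : (0:ℝ) ≤ 1/3) (by norm_num : (1:ℝ)/3 < 1)
    simpa [ha] using this.const_mul (3/2 : ℝ)
  have hcont : ContinuousAt (fun y : ℝ => (2:ℝ) ^ y) 0 :=
    Real.continuousAt_const_rpow (by norm_num)
  have htu : Tendsto (fun n => (2:ℝ) ^ (a n) * (x+1)) atTop (nhds (x+1)) := by
    have := (hcont.tendsto.comp ha0).mul_const (x+1)
    simpa using this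
  have htl : Tendsto (fun n => (2:ℝ) ^ (-(a n)) * (x+1)) atTop (nhds (x+1)) := by
    have := (hcont.tendsto.comp (by simpa using ha0.neg : Tendsto (fun n => -(a n)) atTop (nhds 0))).mul_const (x+1)
    simpa using this
  have hle : f x ≤ x + 1 := ge_of_tendsto htu (Eventually.of_forall fun n => (key n).2 x hx)
  have hge : x + 1 ≤ f x := le_of_tendsto htl (Eventually.of_forall fun n => (key n).1 x hx)
  linarith
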